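/- Let G be a finitely generated group with trivial abelianization (H₁(G,ℤ) = 0), and let ρ be an orientation-preserving action of G on the circle by homeomorphisms that preserves a Borel probability measure μ on S¹ (that is, the pushforward of μ under ρ(g) equals μ for all g ∈ G). Then G acts with a global fixed point: there exists p ∈ S¹ such that ρ(g)(p) = p for all g ∈ G. -/

import Mathlib

open MeasureTheory

/-- The group of self-homeomorphisms of the circle `S¹ = ℝ/ℤ`,
with `f * g = f ∘ g`. -/
noncomputable instance : Group (UnitAddCircle ≃ₜ UnitAddCircle) where
  mul f g := g.trans f
  one := Homeomorph.refl _
  inv := Homeomorph.symm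
  mul_assoc _ _ _ := Homeomorph.ext fun _ => rfl
  one_mul _ := Homeomorph.ext fun _ => rfl
  mul_one _ := Homeomorph.ext fun _ => rfl
  inv_mul_cancel a := Homeomorph.ext a.symm_apply_apply

/-- `F : ℝ → ℝ` is a `C¹` lift of the circle homeomorphism `f`: it is `C¹` with
nowhere-vanishing derivative, commutes with the deck transformation up to sign,
and descends to `f` on `ℝ/ℤ`. -/
def IsC1Lift (f : UnitAddCircle ≃ₜ UnitAddCircle) (F : ℝ → ℝ) : Prop :=
  ContDiff ℝ 1 F ∧ (∀ x : ℝ, deriv F x ≠ 0) ∧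
    ((∀ x : ℝ, F (x + 1) = F x + 1) ∨ (∀ x : ℝ, F (x + 1) = F x - 1)) ∧
    ∀ x : ℝ, f (x : UnitAddCircle) = ((F x : ℝ) : UnitAddCircle)

/-- A `C¹` action of a group `Γ` on the circle: a homomorphism into the
self-homeomorphisms of the circle all of whose values admit `C¹` lifts. -/
def IsC1Action {Γ : Type*} [Group Γ] (ρ : Γ →* (UnitAddCircle ≃ₜ UnitAddCircle)) : Prop :=
  ∀ γ : Γ, ∃ F : ℝ → ℝ, IsC1Lift (ρ γ) F

/-- `F : ℝ → ℝ` is an orientation-preserving `C¹` lift of the circle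
homeomorphism `f`: it is `C¹` with everywhere positive derivative,
satisfies `F (x+1) = F x + 1` and descends to `f` on `ℝ/ℤ`. -/
def IsOPC1Lift (f : UnitAddCircle ≃ₜ UnitAddCircle) (F : ℝ → ℝ) : Prop :=
  ContDiff ℝ 1 F ∧ (∀ x : ℝ, 0 < deriv F x) ∧
    (∀ x : ℝ, F (x + 1) = F x + 1) ∧
    ∀ x : ℝ, f (x : UnitAddCircle) = ((F x : ℝ) : UnitAddCircle)

/-- `F : ℝ → ℝ` is an orientation-preserving (topological) lift of the circle
homeomorphism `f`: continuous, strictly increasing, satisfies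
`F (x+1) = F x + 1`, and descends to `f` on `ℝ/ℤ`. -/
def IsOPLift (f : UnitAddCircle ≃ₜ UnitAddCircle) (F : ℝ → ℝ) : Prop :=
  Continuous F ∧ StrictMono F ∧
    (∀ x : ℝ, F (x + 1) = F x + 1) ∧
    ∀ x : ℝ, f (x : UnitAddCircle) = ((F x : ℝ) : UnitAddCircle)

/-! For an orientation-preserving lift `F` of a `μ`-invariant homeomorphism, the mean displacement
`∫ (F x - x) dμ` is additive under composition and shifts by `n` when `F` is replaced by `F + n`.
Modulo `ℤ` it is therefore a homomorphism `G → ℝ/ℤ`, which is trivial since `G` is perfect, so each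
`ρ g` has a lift with mean displacement zero. Such a lift has a fixed point, and it cannot move a
point `x` of the support of `μ` upwards: otherwise a small interval `(y, F y)` around `x`, lying in
one fundamental domain above a fixed point, would be wandering, hence `μ`-null by Poincaré
recurrence. Applied to `g` and `g⁻¹`, this shows that every point of the support is fixed. -/

open Set Filter Topology

theorem exists_eq_integral_of_continuous {X : Type*} [TopologicalSpace X] [PreconnectedSpace X]
    [MeasurableSpace X] {μ : Measure X} [IsProbabilityMeasure μ] {φ : X → ℝ}
    (hφ : Continuous φ) (hint : Integrable φ μ) : ∃ x, φ x = ∫ q, φ q ∂μ := by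
  obtain ⟨a, ha⟩ := exists_le_integral hint
  obtain ⟨b, hb⟩ := exists_integral_le hint
  exact intermediate_value_univ a b hφ ⟨ha, hb⟩

theorem MonoidHom.apply_eq_one_of_subsingleton_abelianization {G A : Type*} [Group G]
    [CommGroup A] [Subsingleton (Abelianization G)] (φ : G →* A) (g : G) : φ g = 1 := by
  rw [← Abelianization.lift_apply_of φ g, Subsingleton.elim (Abelianization.of g) 1, map_one]

theorem UnitAddCircle.coe_add_intCast (x : ℝ) (n : ℤ) :
    ((x + n : ℝ) : UnitAddCircle) = x :=
  QuotientAddGroup.mk_add_of_mem _ (AddSubgroup.intCast_mem_zmultiples_one n)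

namespace IsOPLift

variable {f g : UnitAddCircle ≃ₜ UnitAddCircle} {F G : ℝ → ℝ}

protected theorem continuous (hF : IsOPLift f F) : Continuous F := hF.1

protected theorem strictMono (hF : IsOPLift f F) : StrictMono F := hF.2.1

theorem map_add_one (hF : IsOPLift f F) (x : ℝ) : F (x + 1) = F x + 1 := hF.2.2.1 x

theorem apply_coe (hF : IsOPLift f F) (x : ℝ) : f x = F x := hF.2.2.2 x

theorem periodic_sub_id (hF : IsOPLift f F) : Function.Periodic (fun x => F x - x) 1 :=
  fun x => by simp only [hF.map_add_one]; ring

theorem map_add_int (hF : IsOPLift f F) (x : ℝ) (n : ℤ) : F (x + n) = F x + n := by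
  have := hF.periodic_sub_id.int_mul n x
  simp only [mul_one] at this
  linarith

theorem semiconj (hF : IsOPLift f F) : Function.Semiconj ((↑) : ℝ → UnitAddCircle) F f :=
  fun x => (hF.apply_coe x).symm

theorem comp (hF : IsOPLift f F) (hG : IsOPLift g G) : IsOPLift (f * g) (F ∘ G) :=
  ⟨hF.continuous.comp hG.continuous, hF.strictMono.comp hG.strictMono,
    fun x => by simp [hG.map_add_one, hF.map_add_one],
    fun x => (hF.semiconj.comp_right hG.semiconj x).symm⟩

theorem add_int (hF : IsOPLift f F) (n : ℤ) : IsOPLift f (fun x => F x + n) :=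
  ⟨hF.continuous.add continuous_const, hF.strictMono.add_const _,
    fun x => by simp only [hF.map_add_one]; ring,
    fun x => by rw [hF.apply_coe, UnitAddCircle.coe_add_intCast]⟩

theorem id_lift : IsOPLift 1 id :=
  ⟨continuous_id, strictMono_id, fun _ => rfl, fun _ => rfl⟩

theorem exists_eq_add_int {F' : ℝ → ℝ} (hF : IsOPLift f F) (hF' : IsOPLift f F') :
    ∃ n : ℤ, F' = fun x => F x + n := by
  obtain ⟨n, hn⟩ : ∃ n : ℤ, F' 0 = F 0 + n := by
    have h0 : ((F 0 : ℝ) : UnitAddCircle) = F' 0 := by rw [← hF.apply_coe, ← hF'.apply_coe]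
    obtain ⟨n, hn⟩ := AddSubgroup.mem_zmultiples_iff.mp (QuotientAddGroup.eq.mp h0)
    exact ⟨n, by simp only [zsmul_eq_mul, mul_one] at hn; linarith⟩
  refine ⟨n, (AddCircle.isCoveringMap_coe 1).eq_of_comp_eq hF'.continuous
    (hF.continuous.add continuous_const) (funext fun x => ?_) 0 hn⟩
  simp only [Function.comp_apply, UnitAddCircle.coe_add_intCast, ← hF.apply_coe, ← hF'.apply_coe]

noncomputable def displacement (hF : IsOPLift f F) : UnitAddCircle → ℝ :=
  hF.periodic_sub_id.lift

@[simp]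
theorem displacement_coe (hF : IsOPLift f F) (x : ℝ) : hF.displacement x = F x - x :=
  rfl

theorem continuous_displacement (hF : IsOPLift f F) : Continuous hF.displacement :=
  (hF.continuous.sub continuous_id).quotient_liftOn' _

noncomputable def meanDisplacement (hF : IsOPLift f F) (μ : Measure UnitAddCircle) : ℝ :=
  ∫ q, hF.displacement q ∂μ

variable {μ : Measure UnitAddCircle}

theorem meanDisplacement_comp [IsFiniteMeasure μ] (hF : IsOPLift f F) (hG : IsOPLift g G)
    (hg : MeasurePreserving g μ μ) :
    (hF.comp hG).meanDisplacement μ = hF.meanDisplacement μ + hG.meanDisplacement μ := by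
  have hsplit :
      (hF.comp hG).displacement = fun q => hF.displacement (g q) + hG.displacement q := by
    funext q
    induction q using QuotientAddGroup.induction_on with
    | H x => simp [hG.apply_coe]
  have hint {φ : UnitAddCircle → ℝ} (hφ : Continuous φ) : Integrable φ μ :=
    hφ.integrable_of_hasCompactSupport (.of_compactSpace _)
  rw [meanDisplacement, hsplit, integral_add (f := fun q => hF.displacement (g q))
    (hint (hF.continuous_displacement.comp g.continuous)) (hint hG.continuous_displacement),
    hg.integral_comp g.measurableEmbedding]
  rfl

theorem meanDisplacement_add_int [IsProbabilityMeasure μ] (hF : IsOPLift f F) (n : ℤ) :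
    (hF.add_int n).meanDisplacement μ = hF.meanDisplacement μ + n := by
  have hshift : (hF.add_int n).displacement = fun q => hF.displacement q + n := by
    funext q
    induction q using QuotientAddGroup.induction_on with
    | H x => simp only [displacement_coe]; ring
  rw [meanDisplacement, hshift, integral_add
    (hF.continuous_displacement.integrable_of_hasCompactSupport (.of_compactSpace _))
    (integrable_const _)]
  simp [meanDisplacement]

theorem coe_meanDisplacement_mul [IsProbabilityMeasure μ] {K : ℝ → ℝ}
    (hK : IsOPLift (f * g) K) (hF : IsOPLift f F) (hG : IsOPLift g G)
    (hg : MeasurePreserving g μ μ) :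
    (hK.meanDisplacement μ : UnitAddCircle) = hF.meanDisplacement μ + hG.meanDisplacement μ := by
  obtain ⟨n, rfl⟩ := (hF.comp hG).exists_eq_add_int hK
  rw [meanDisplacement_add_int (hF.comp hG), UnitAddCircle.coe_add_intCast,
    meanDisplacement_comp hF hG hg, AddCircle.coe_add]

theorem exists_fixedPoint_of_meanDisplacement_eq_zero [IsProbabilityMeasure μ]
    (hF : IsOPLift f F) (h0 : hF.meanDisplacement μ = 0) : ∃ c, F c = c := by
  obtain ⟨q, hq⟩ := exists_eq_integral_of_continuous hF.continuous_displacement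
    (hF.continuous_displacement.integrable_of_hasCompactSupport (μ := μ) (.of_compactSpace _))
  obtain ⟨c, rfl⟩ := QuotientAddGroup.mk_surjective q
  refine ⟨c, ?_⟩
  rw [← meanDisplacement, h0, displacement_coe] at hq
  linarith

theorem exists_fixedPoint_le_lt_add_one (hF : IsOPLift f F) {c : ℝ} (hc : F c = c) (y : ℝ) :
    ∃ a, F a = a ∧ a ≤ y ∧ y < a + 1 :=
  ⟨c + ⌊y - c⌋, by rw [hF.map_add_int, hc], by linarith [Int.floor_le (y - c)],
    by linarith [Int.lt_floor_add_one (y - c)]⟩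

theorem coe_iterate_notMem_image_Ioo (hF : IsOPLift f F) {a y t : ℝ} (ha : F a = a)
    (hay : a ≤ y) (hya : y < a + 1) (hy : y < F y) (ht : t ∈ Ioo y (F y)) {m : ℕ} (hm : m ≠ 0) :
    ((F^[m] t : ℝ) : UnitAddCircle) ∉ ((↑) : ℝ → UnitAddCircle) '' Ioo y (F y) := by
  rintro ⟨s, hs, hst⟩
  have hFa : F (a + 1) = a + 1 := by rw [hF.map_add_one, ha]
  have hlow : F y < F^[m] t := calc
    F y = F^[1] y := rfl
    _ ≤ F^[m] y := hF.strictMono.monotone.monotone_iterate_of_le_map hy.le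
      (Nat.one_le_iff_ne_zero.mpr hm)
    _ < F^[m] t := hF.strictMono.iterate m ht.1
  have hup : F^[m] t < a + 1 := calc
    F^[m] t < F^[m] (a + 1) := hF.strictMono.iterate m (ht.2.trans (hFa ▸ hF.strictMono hya))
    _ = a + 1 := Function.iterate_fixed hFa m
  have hFy : F y < a + 1 := hFa ▸ hF.strictMono hya
  have := (AddCircle.coe_eq_coe_iff_of_mem_Ico (p := (1 : ℝ)) (a := y)
    ⟨hs.1.le, by linarith [hs.2]⟩ ⟨by linarith [hy], by linarith⟩).mp hst
  linarith [hs.2]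

theorem measure_image_Ioo_eq_zero [IsFiniteMeasure μ] (hF : IsOPLift f F)
    (hf : MeasurePreserving f μ μ) {a y : ℝ} (ha : F a = a) (hay : a ≤ y) (hya : y < a + 1)
    (hy : y < F y) : μ (((↑) : ℝ → UnitAddCircle) '' Ioo y (F y)) = 0 := by
  by_contra hpos
  obtain ⟨_, ⟨t, ht, rfl⟩, m, hm, hret⟩ := hf.exists_mem_iterate_mem
    (QuotientAddGroup.isOpenMap_coe _ isOpen_Ioo).measurableSet.nullMeasurableSet hpos
  rw [← (hF.semiconj.iterate_right m).eq t] at hret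
  exact hF.coe_iterate_notMem_image_Ioo ha hay hya hy ht hm hret

theorem le_of_mem_support [IsFiniteMeasure μ] (hF : IsOPLift f F)
    (hf : MeasurePreserving f μ μ) {c : ℝ} (hc : F c = c) {x : ℝ}
    (hx : (x : UnitAddCircle) ∈ μ.support) : F x ≤ x := by
  by_contra! hxF
  obtain ⟨y, hxy, hyx⟩ : ∃ y, x < F y ∧ y < x :=
    ((((hF.continuous.tendsto x).eventually (lt_mem_nhds hxF)).filter_mono nhdsWithin_le_nhds).and
      (self_mem_nhdsWithin (s := Iio x))).exists
  obtain ⟨a, ha, hay, hya⟩ := hF.exists_fixedPoint_le_lt_add_one hc y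
  have hU := (QuotientAddGroup.isOpenMap_coe _ isOpen_Ioo).mem_nhds
    (mem_image_of_mem ((↑) : ℝ → UnitAddCircle) (show x ∈ Ioo y (F y) from ⟨hyx, hxy⟩))
  have := (Measure.mem_support_iff_forall _).mp hx _ hU
  rw [hF.measure_image_Ioo_eq_zero hf ha hay hya (hyx.trans hxy)] at this
  exact lt_irrefl _ this

theorem eq_add_meanDisplacement_of_isOPLift_one [IsProbabilityMeasure μ] {K : ℝ → ℝ}
    (hK : IsOPLift 1 K) : K = fun x => x + hK.meanDisplacement μ := by
  obtain ⟨n, rfl⟩ := id_lift.exists_eq_add_int hK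
  have hid : id_lift.displacement = 0 := by
    funext q
    induction q using QuotientAddGroup.induction_on with
    | H x => simp
  rw [meanDisplacement_add_int id_lift]
  simp [meanDisplacement, hid]

theorem apply_eq_of_mem_support [IsProbabilityMeasure μ] {H : ℝ → ℝ} (hF : IsOPLift f F)
    (hH : IsOPLift f⁻¹ H) (hf : MeasurePreserving f μ μ) (hF0 : hF.meanDisplacement μ = 0)
    (hH0 : hH.meanDisplacement μ = 0) {x : ℝ} (hx : (x : UnitAddCircle) ∈ μ.support) :
    F x = x := by
  have hf' : MeasurePreserving ⇑(f⁻¹) μ μ := hf.symm f.toMeasurableEquiv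
  have hHF : ∀ y, H (F y) = y := by
    have hK : IsOPLift 1 (H ∘ F) := inv_mul_cancel f ▸ hH.comp hF
    have hK0 : hK.meanDisplacement μ = 0 :=
      (meanDisplacement_comp hH hF hf).trans (by rw [hH0, hF0, add_zero])
    intro y
    simpa [hK0] using congrFun (eq_add_meanDisplacement_of_isOPLift_one (μ := μ) hK) y
  obtain ⟨c, hc⟩ := hF.exists_fixedPoint_of_meanDisplacement_eq_zero hF0
  obtain ⟨d, hd⟩ := hH.exists_fixedPoint_of_meanDisplacement_eq_zero hH0
  refine le_antisymm (hF.le_of_mem_support hf hc hx) (not_lt.mp fun hlt => ?_)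
  have := hH.strictMono hlt
  rw [hHF] at this
  exact (hH.le_of_mem_support hf' hd hx).not_gt this

end IsOPLift

theorem exists_isOPLift_meanDisplacement_eq_zero {Γ : Type*} [Group Γ]
    [Subsingleton (Abelianization Γ)] (ρ : Γ →* (UnitAddCircle ≃ₜ UnitAddCircle))
    (hρ : ∀ γ, ∃ F, IsOPLift (ρ γ) F) {μ : Measure UnitAddCircle} [IsProbabilityMeasure μ]
    (hμ : ∀ γ, MeasurePreserving (ρ γ) μ μ) (γ : Γ) :
    ∃ F, ∃ hF : IsOPLift (ρ γ) F, hF.meanDisplacement μ = 0 := by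
  choose F hF using hρ
  let τ : Γ →* Multiplicative UnitAddCircle := MonoidHom.mk'
    (fun γ => .ofAdd ((hF γ).meanDisplacement μ : UnitAddCircle)) fun α β =>
      (map_mul ρ α β ▸ hF (α * β)).coe_meanDisplacement_mul (hF α) (hF β) (hμ β)
  obtain ⟨n, hn⟩ := (AddCircle.coe_eq_zero_iff _).mp
    (congrArg Multiplicative.toAdd (τ.apply_eq_one_of_subsingleton_abelianization γ))
  refine ⟨_, (hF γ).add_int (-n), ?_⟩
  rw [(hF γ).meanDisplacement_add_int, ← hn]
  simp

theorem global_fixed_point_of_perfect_measure_preserving_general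
    {G : Type*} [Group G]
    (hab : Subsingleton (Abelianization G))
    (ρ : G →* (UnitAddCircle ≃ₜ UnitAddCircle))
    (hρ : ∀ g : G, ∃ F : ℝ → ℝ, IsOPLift (ρ g) F)
    (μ : Measure UnitAddCircle) [IsProbabilityMeasure μ]
    (hinv : ∀ g : G, Measure.map (ρ g) μ = μ) :
    ∃ p : UnitAddCircle, ∀ g : G, ρ g p = p := by
  have hμ (g : G) : MeasurePreserving (ρ g) μ μ := ⟨(ρ g).continuous.measurable, hinv g⟩
  obtain ⟨p, hp⟩ := μ.nonempty_support (IsProbabilityMeasure.ne_zero μ)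
  obtain ⟨x, rfl⟩ := QuotientAddGroup.mk_surjective p
  refine ⟨x, fun g => ?_⟩
  obtain ⟨F, hF, hF0⟩ := exists_isOPLift_meanDisplacement_eq_zero ρ hρ hμ g
  obtain ⟨H, hH, hH0⟩ := exists_isOPLift_meanDisplacement_eq_zero ρ hρ hμ g⁻¹
  rw [hF.apply_coe, hF.apply_eq_of_mem_support (map_inv ρ g ▸ hH) (hμ g) hF0 hH0 hp]

/-- **Corollary.** A finitely generated group with trivial abelianization acting
on the circle by orientation-preserving homeomorphisms and preserving a Borel
probability measure has a global fixed point. -/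
theorem global_fixed_point_of_perfect_measure_preserving
    {G : Type*} [Group G] (hfg : Group.FG G)
    (hab : Subsingleton (Abelianization G))
    (ρ : G →* (UnitAddCircle ≃ₜ UnitAddCircle))
    (hρ : ∀ g : G, ∃ F : ℝ → ℝ, IsOPLift (ρ g) F)
    (μ : Measure UnitAddCircle) [IsProbabilityMeasure μ]
    (hinv : ∀ g : G, Measure.map (ρ g) μ = μ) :
    ∃ p : UnitAddCircle, ∀ g : G, ρ g p = p :=
  global_fixed_point_of_perfect_measure_preserving_general hab ρ hρ μ hinv
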